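/- Let m, n be positive integers with mn even. Then the Kasteleyn matrix K of the m×n grid graph is invertible, and its inverse is given by the spectral formula K^{−1}(u,v) = (4/((m+1)(n+1)))·Σ_{j=1}^{m} Σ_{k=1}^{n} f_{j,k}(u)·f_{j,k}(v)/λ_{j,k}, where f_{j,k}(x,y) = sin(πj(x+1)/(m+1))·sin(πk(y+1)/(n+1)) and λ_{j,k} = 2cos(πj/(m+1)) + 2i·cos(πk/(n+1)). -/

import Mathlib

/-- The m×n grid graph on vertex set Fin m × Fin n: (x,y) ~ (x',y') iff |x-x'|+|y-y'| = 1. -/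
def gridGraph (m n : ℕ) : SimpleGraph (Fin m × Fin n) :=
  SimpleGraph.fromRel (fun u v =>
    (u.1 = v.1 ∧ u.2.val + 1 = v.2.val) ∨ (u.2 = v.2 ∧ u.1.val + 1 = v.1.val))

/-- The Kasteleyn matrix of the m×n grid graph: horizontal edges weighted 1,
vertical edges weighted i, all other entries 0. -/
def kasteleyn (m n : ℕ) : Matrix (Fin m × Fin n) (Fin m × Fin n) ℂ :=
  Matrix.of fun u v =>
    if u.2 = v.2 ∧ (u.1.val + 1 = v.1.val ∨ v.1.val + 1 = u.1.val) then 1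
    else if u.1 = v.1 ∧ (u.2.val + 1 = v.2.val ∨ v.2.val + 1 = u.2.val) then Complex.I
    else 0

/-!
The Kasteleyn matrix of the grid is the Kronecker sum `A_m ⊗ 1 + i (1 ⊗ A_n)` of adjacency
matrices of paths. The path `A_N` is diagonalised by the discrete sine vectors
`x ↦ sin (π j (x + 1) / (N + 1))`, `1 ≤ j ≤ N`, with eigenvalues `2 cos (π j / (N + 1))`,
and these vectors are orthogonal with squared norm `(N + 1) / 2`. Hence the products `f_{j,k}`
of sine vectors are eigenvectors of `K` with eigenvalues `λ_{j,k}` and form a resolution of the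
identity, so `K⁻¹` is the sum of their rank-one projections divided by `λ_{j,k}`. No `λ_{j,k}`
vanishes: both cosines vanish only if `m + 1 = 2 j` and `n + 1 = 2 k`, which makes `m n` odd.
-/

open Real Finset Matrix SimpleGraph
open scoped Kronecker

theorem Matrix.kronecker_mulVec_mul {R l m n p : Type*} [CommSemiring R] [Fintype m] [Fintype p]
    (u : m → R) (v : p → R) (A : Matrix l m R) (B : Matrix n p R) :
    (A ⊗ₖ B) *ᵥ (fun q => u q.1 * v q.2) = fun q => (A *ᵥ u) q.1 * (B *ᵥ v) q.2 := by
  ext ⟨i, k⟩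
  simp only [mulVec, dotProduct, kroneckerMap_apply, Fintype.sum_prod_type, sum_mul_sum]
  exact sum_congr rfl fun _ _ => sum_congr rfl fun _ _ => by ring

theorem Matrix.mul_sum_inv_smul_vecMulVec_eq_one {K ι n : Type*} [Field K] [Fintype n]
    [DecidableEq n] (M : Matrix n n K) (s : Finset ι) (f g : ι → n → K) (μ : ι → K)
    (hμ : ∀ i ∈ s, μ i ≠ 0) (hf : ∀ i ∈ s, M *ᵥ f i = μ i • f i)
    (hfg : ∑ i ∈ s, vecMulVec (f i) (g i) = 1) :
    M * ∑ i ∈ s, (μ i)⁻¹ • vecMulVec (f i) (g i) = 1 := by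
  rw [Matrix.mul_sum, ← hfg]
  refine sum_congr rfl fun i hi => ?_
  rw [Matrix.mul_smul, mul_vecMulVec, hf i hi, smul_vecMulVec, smul_smul,
    inv_mul_cancel₀ (hμ i hi), one_smul]

theorem sum_range_cos_pi_mul_int_div {N : ℕ} (hN : N ≠ 0) {r : ℤ}
    (hr : ¬ (2 * N : ℤ) ∣ r) :
    ∑ j ∈ range N, cos (π * r * j / N) = (1 - (-1) ^ r) / 2 := by
  -- Telescope `sin φ * cos (2 j φ)`; the boundary term is `sin ((2N - 1) φ) = sin (r π - φ)`.
  set φ := π * r / (2 * N) with hφ_def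
  have hφ : sin φ ≠ 0 := by
    rw [sin_ne_zero_iff]
    rintro k hk
    refine hr ⟨k, ?_⟩
    have : (r : ℝ) = 2 * N * k := by
      rw [hφ_def] at hk; field_simp at hk; linarith [pi_pos]
    exact_mod_cast this
  have hsum := sin_mul_sum_cos N (2 * φ) 0
  rw [show 2 * φ / 2 = φ by ring, show (N : ℝ) * (2 * φ) / 2 = N * φ by ring,
    show ((N : ℝ) - 1) * (2 * φ) / 2 + 0 = (N - 1) * φ by ring] at hsum
  have hprod := two_mul_sin_mul_cos (N * φ) ((N - 1) * φ)
  rw [show (N : ℝ) * φ - (N - 1) * φ = φ by ring,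
    show (N : ℝ) * φ + (N - 1) * φ = r * π - φ by rw [hφ_def]; field_simp; ring,
    sin_int_mul_pi_sub] at hprod
  have hterm : ∀ j : ℕ, π * r * j / N = 2 * φ * j + 0 := fun j => by
    rw [hφ_def, add_zero]; field_simp
  refine mul_left_cancel₀ hφ ?_
  simp_rw [hterm, hsum]
  linear_combination hprod / 2

noncomputable def sineVec (N j : ℕ) (x : Fin N) : ℝ := sin (π * j * (x.val + 1) / (N + 1))

theorem sum_sineVec_mul_sineVec (N : ℕ) (x y : Fin N) :
    ∑ j ∈ Icc 1 N, sineVec N j x * sineVec N j y =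
      if x = y then ((N : ℝ) + 1) / 2 else 0 := by
  have hrange : ∑ j ∈ range (N + 1), sineVec N j x * sineVec N j y =
      ∑ j ∈ Icc 1 N, sineVec N j x * sineVec N j y := by
    rw [range_eq_Ico, sum_eq_sum_Ico_succ_bot N.add_one_pos, Finset.Ico_add_one_right_eq_Icc]
    simp [sineVec]
  have hprod (j : ℕ) : 2 * (sineVec N j x * sineVec N j y) =
      cos (π * ((x : ℤ) - y : ℤ) * j / (N + 1 : ℕ)) -
        cos (π * ((x : ℤ) + y + 2 : ℤ) * j / (N + 1 : ℕ)) := by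
    rw [sineVec, sineVec, ← mul_assoc, two_mul_sin_mul_sin]
    push_cast
    ring_nf
  have hdvd {r : ℤ} (hr : 0 < |r|) (hr' : |r| < 2 * (N + 1 : ℕ)) :
      ¬ (2 * (N + 1 : ℕ) : ℤ) ∣ r :=
    fun h => hr.ne' (abs_eq_zero.mpr (Int.eq_zero_of_abs_lt_dvd h hr'))
  have hplus := sum_range_cos_pi_mul_int_div N.succ_ne_zero
    (hdvd (r := (x : ℤ) + y + 2) (by positivity) (by rw [abs_lt]; omega))
  rw [← hrange, ← mul_right_inj' (two_ne_zero' ℝ), mul_sum]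
  simp_rw [hprod]
  rw [sum_sub_distrib, hplus]
  -- `x - y` and `x + y + 2` have the same parity, so off the diagonal the two sums cancel.
  split_ifs with hxy
  · subst hxy
    have heven : Even ((x : ℤ) + x + 2) := ⟨x + 1, by ring⟩
    simp only [sub_self, Int.cast_zero, mul_zero, zero_mul, zero_div, cos_zero, sum_const,
      card_range, nsmul_eq_mul, mul_one, heven.neg_one_zpow]
    push_cast
    ring
  · have hminus := sum_range_cos_pi_mul_int_div N.succ_ne_zero
      (hdvd (r := (x : ℤ) - y) (by simpa [sub_eq_zero, Fin.val_eq_val] using hxy)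
        (by rw [abs_lt]; omega))
    have hparity : (x : ℤ) + y + 2 = (x - y) + 2 * (y + 1) := by ring
    rw [hminus, hparity, zpow_add₀ (by norm_num), (even_two_mul _).neg_one_zpow]
    ring

instance (N : ℕ) : DecidableRel (pathGraph N).Adj := fun _ _ => decidable_of_iff' _ pathGraph_adj

theorem pathGraph_adjMatrix_mulVec_of_recurrence {R : Type*} [NonAssocSemiring R] {N : ℕ}
    {g : ℕ → R} (c : R) (h₀ : g 0 = 0) (hN : g (N + 1) = 0)
    (hrec : ∀ a, g a + g (a + 2) = c * g (a + 1)) :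
    (pathGraph N).adjMatrix R *ᵥ (fun x => g (x.val + 1)) = c • fun x => g (x.val + 1) := by
  ext x
  have hsplit (y : Fin N) : (pathGraph N).adjMatrix R x y * g (y.val + 1) =
      (if y.val = x.val + 1 then g (y.val + 1) else 0) +
        (if y.val + 1 = x.val then g (y.val + 1) else 0) := by
    simp only [adjMatrix_apply, pathGraph_adj]
    split_ifs <;> first | omega | simp
  have hright :
      ∑ y : Fin N, (if y.val = x.val + 1 then g (y.val + 1) else 0) = g (x.val + 2) := by
    rw [Fin.sum_univ_eq_sum_range (fun a => if a = x.val + 1 then g (a + 1) else 0), sum_ite_eq']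
    split_ifs with h
    · rfl
    · rw [show x.val + 2 = N + 1 by simp only [mem_range, not_lt] at h; omega, hN]
  have hleft : ∑ y : Fin N, (if y.val + 1 = x.val then g (y.val + 1) else 0) = g x.val := by
    rw [Fin.sum_univ_eq_sum_range (fun a => if a + 1 = x.val then g (a + 1) else 0)]
    rcases Nat.eq_zero_or_eq_succ_pred x.val with h | h
    · simp [h, h₀]
    · rw [h]
      simp_rw [Nat.succ_inj, sum_ite_eq', mem_range]
      rw [if_pos (by omega)]
  simp only [mulVec, dotProduct, hsplit, sum_add_distrib, hright, hleft]
  simp only [Pi.smul_apply, smul_eq_mul, ← hrec]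
  exact add_comm _ _

theorem pathGraph_adjMatrix_mulVec_sineVec (N j : ℕ) :
    (pathGraph N).adjMatrix ℂ *ᵥ (fun x => (sineVec N j x : ℂ)) =
      ((2 * cos (π * j / (N + 1)) : ℝ) : ℂ) • fun x => (sineVec N j x : ℂ) := by
  have hN : (N : ℝ) + 1 ≠ 0 := by positivity
  have h := pathGraph_adjMatrix_mulVec_of_recurrence (N := N)
    (g := fun a => (sin (π * j * a / (N + 1)) : ℂ)) ((2 * cos (π * j / (N + 1)) : ℝ) : ℂ)
    (by simp)
    (by
      rw [← Complex.ofReal_zero]; congr 1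
      push_cast; rw [mul_div_assoc, div_self hN, mul_one, mul_comm, sin_nat_mul_pi])
    (fun a => by
      rw [← Complex.ofReal_add, ← Complex.ofReal_mul]; congr 1
      rw [mul_right_comm (2 : ℝ), two_mul_sin_mul_cos]
      congr 2 <;> push_cast <;> ring)
  simpa [sineVec] using h

theorem kasteleyn_eq_kronecker (m n : ℕ) :
    kasteleyn m n =
      (pathGraph m).adjMatrix ℂ ⊗ₖ 1 +
        Complex.I • (1 ⊗ₖ (pathGraph n).adjMatrix ℂ) := by
  ext ⟨x, y⟩ ⟨x', y'⟩
  simp only [kasteleyn, of_apply, Matrix.add_apply, Matrix.smul_apply, kroneckerMap_apply,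
    adjMatrix_apply, pathGraph_adj, one_apply, smul_eq_mul, Fin.ext_iff]
  split_ifs <;> first | omega | simp

-- `gridMode m n j k` and `gridEigenvalue m n j k` are the statement's `f_{j,k}` and `λ_{j,k}`.
noncomputable def gridMode (m n j k : ℕ) : Fin m × Fin n → ℂ :=
  fun p => (sineVec m j p.1 : ℂ) * (sineVec n k p.2 : ℂ)

noncomputable def gridEigenvalue (m n j k : ℕ) : ℂ :=
  ((2 * cos (π * j / (m + 1)) : ℝ) : ℂ) +
    2 * Complex.I * ((cos (π * k / (n + 1)) : ℝ) : ℂ)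

theorem kasteleyn_mulVec_gridMode (m n j k : ℕ) :
    kasteleyn m n *ᵥ gridMode m n j k = gridEigenvalue m n j k • gridMode m n j k := by
  have hprod (A : Matrix (Fin m) (Fin m) ℂ) (B : Matrix (Fin n) (Fin n) ℂ) :=
    kronecker_mulVec_mul (fun x => (sineVec m j x : ℂ)) (fun y => (sineVec n k y : ℂ)) A B
  unfold gridMode
  rw [kasteleyn_eq_kronecker, add_mulVec, smul_mulVec, hprod, hprod, one_mulVec, one_mulVec,
    pathGraph_adjMatrix_mulVec_sineVec, pathGraph_adjMatrix_mulVec_sineVec]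
  ext p
  simp only [Pi.add_apply, Pi.smul_apply, smul_eq_mul, gridEigenvalue]
  push_cast
  ring

theorem add_one_eq_two_mul_of_cos_eq_zero {N j : ℕ} (hj : j ≤ N + 1)
    (hcos : cos (π * j / (N + 1)) = 0) : N + 1 = 2 * j := by
  have hmem : π * j / (N + 1) ∈ Set.Icc 0 π := by
    refine ⟨by positivity, ?_⟩
    rw [div_le_iff₀ (by positivity)]
    have : (j : ℝ) ≤ N + 1 := by exact_mod_cast hj
    nlinarith [pi_pos]
  have h := injOn_cos hmem ⟨by positivity, by linarith [pi_pos]⟩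
    (hcos.trans cos_pi_div_two.symm)
  field_simp at h
  exact_mod_cast h.symm.trans (mul_comm _ _)

theorem gridEigenvalue_ne_zero {m n j k : ℕ} (hmn : Even (m * n)) (hj : j ∈ Icc 1 m)
    (hk : k ∈ Icc 1 n) : gridEigenvalue m n j k ≠ 0 := by
  rw [mem_Icc] at hj hk
  intro h
  obtain ⟨hre, him⟩ : cos (π * j / (m + 1)) = 0 ∧ cos (π * k / (n + 1)) = 0 := by
    simp only [gridEigenvalue, Complex.ext_iff, Complex.add_re, Complex.add_im, Complex.mul_re,
      Complex.mul_im, Complex.ofReal_re, Complex.ofReal_im, Complex.I_re, Complex.I_im,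
      Complex.re_ofNat, Complex.im_ofNat, Complex.zero_re, Complex.zero_im] at h
    constructor <;> linarith [h.1, h.2]
  have hm := add_one_eq_two_mul_of_cos_eq_zero (by omega) hre
  have hn := add_one_eq_two_mul_of_cos_eq_zero (by omega) him
  have hodd : Odd (m * n) := Nat.odd_mul.mpr ⟨⟨j - 1, by omega⟩, ⟨k - 1, by omega⟩⟩
  exact Nat.not_even_iff_odd.mpr hodd hmn

theorem sum_vecMulVec_gridMode (m n : ℕ) :
    ∑ p ∈ Icc 1 m ×ˢ Icc 1 n, vecMulVec (gridMode m n p.1 p.2)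
      (((4 / ((m + 1) * (n + 1)) : ℝ) : ℂ) • gridMode m n p.1 p.2) = 1 := by
  ext u v
  have hsep : ∑ p ∈ Icc 1 m ×ˢ Icc 1 n, gridMode m n p.1 p.2 u * gridMode m n p.1 p.2 v =
      ((∑ j ∈ Icc 1 m, sineVec m j u.1 * sineVec m j v.1) *
        ∑ k ∈ Icc 1 n, sineVec n k u.2 * sineVec n k v.2 : ℝ) := by
    rw [sum_product, sum_mul_sum]
    push_cast
    exact sum_congr rfl fun _ _ => sum_congr rfl fun _ _ => by simp only [gridMode]; ring
  simp only [Matrix.sum_apply, vecMulVec_smul, Matrix.smul_apply, vecMulVec_apply, smul_eq_mul,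
    ← mul_sum, hsep, sum_sineVec_mul_sineVec, one_apply, Prod.ext_iff]
  rw [ite_zero_mul_ite_zero]
  split_ifs
  · push_cast
    field_simp
    ring
  · simp

theorem kasteleyn_inverse_general (m n : ℕ) (hmn : Even (m * n)) :
    IsUnit (kasteleyn m n).det ∧
    ∀ u v : Fin m × Fin n,
      (kasteleyn m n)⁻¹ u v =
        ((4 / ((m + 1) * (n + 1)) : ℝ) : ℂ) *
          ∑ j ∈ Finset.Icc 1 m, ∑ k ∈ Finset.Icc 1 n,
            ((Real.sin (Real.pi * j * (u.1.val + 1) / (m + 1)) : ℂ) *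
              (Real.sin (Real.pi * k * (u.2.val + 1) / (n + 1)) : ℂ)) *
            ((Real.sin (Real.pi * j * (v.1.val + 1) / (m + 1)) : ℂ) *
              (Real.sin (Real.pi * k * (v.2.val + 1) / (n + 1)) : ℂ)) /
            (((2 * Real.cos (Real.pi * j / (m + 1)) : ℝ) : ℂ) +
              2 * Complex.I * ((Real.cos (Real.pi * k / (n + 1)) : ℝ) : ℂ)) := by
  have hKB := mul_sum_inv_smul_vecMulVec_eq_one (kasteleyn m n) (Icc 1 m ×ˢ Icc 1 n)
    (fun p => gridMode m n p.1 p.2)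
    (fun p => ((4 / ((m + 1) * (n + 1)) : ℝ) : ℂ) • gridMode m n p.1 p.2)
    (fun p => gridEigenvalue m n p.1 p.2)
    (fun p hp => gridEigenvalue_ne_zero hmn (mem_product.mp hp).1 (mem_product.mp hp).2)
    (fun p _ => kasteleyn_mulVec_gridMode m n p.1 p.2) (sum_vecMulVec_gridMode m n)
  refine ⟨isUnit_det_of_right_inverse hKB, fun u v => ?_⟩
  rw [inv_eq_right_inv hKB, Matrix.sum_apply, sum_product, mul_sum]
  refine sum_congr rfl fun j _ => ?_
  rw [mul_sum]
  refine sum_congr rfl fun k _ => ?_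
  simp only [Matrix.smul_apply, vecMulVec_apply, Pi.smul_apply, smul_eq_mul, gridMode, sineVec,
    gridEigenvalue]
  ring

/-- For m, n with mn even, the Kasteleyn matrix of the m×n grid graph is invertible, and
K⁻¹(u,v) = (4/((m+1)(n+1)))·Σ_{j=1}^m Σ_{k=1}^n f_{j,k}(u)·f_{j,k}(v)/λ_{j,k}, where
f_{j,k}(x,y) = sin(πj(x+1)/(m+1))·sin(πk(y+1)/(n+1)) and
λ_{j,k} = 2cos(πj/(m+1)) + 2i·cos(πk/(n+1)). -/
theorem kasteleyn_inverse (m n : ℕ) (hm : 0 < m) (hn : 0 < n) (hmn : Even (m * n)) :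
    IsUnit (kasteleyn m n).det ∧
    ∀ u v : Fin m × Fin n,
      (kasteleyn m n)⁻¹ u v =
        ((4 / ((m + 1) * (n + 1)) : ℝ) : ℂ) *
          ∑ j ∈ Finset.Icc 1 m, ∑ k ∈ Finset.Icc 1 n,
            ((Real.sin (Real.pi * j * (u.1.val + 1) / (m + 1)) : ℂ) *
              (Real.sin (Real.pi * k * (u.2.val + 1) / (n + 1)) : ℂ)) *
            ((Real.sin (Real.pi * j * (v.1.val + 1) / (m + 1)) : ℂ) *
              (Real.sin (Real.pi * k * (v.2.val + 1) / (n + 1)) : ℂ)) /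
            (((2 * Real.cos (Real.pi * j / (m + 1)) : ℝ) : ℂ) +
              2 * Complex.I * ((Real.cos (Real.pi * k / (n + 1)) : ℝ) : ℂ)) :=
  kasteleyn_inverse_general m n hmn
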